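/- Let c ≥ 1/2 and K > 0. There exists a constant C = C(c, K) such that for every sequence a = (a_n)_{n≥0} of complex numbers with ‖a‖_{c,K} < ∞, all series occurring in the definition of T a = D³(H(D a)) converge absolutely, and ‖T a‖_{c,K} ≤ C ‖a‖_{c,K}. -/

import Mathlib

/-!
Write `w m = (m/K)^(c m)` (`seqWeight c K` below), so that `‖a‖_{c,K} ≤ M` means
`|a_m| ≤ M / w m`. Since `c ≥ 1/2`, `w (m + 2) ≥ ((m + 2)/K) w m`, so `1 / w` and every majorant
built from it decays geometrically along each residue class mod 2 from some index on; hence the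
tail sums defining `D` converge and are bounded multiples of their first terms. Each `D` then costs
a factor `n + 2` and a shift by one, `H` gains `1/((n+1)(n+3))`, and `T a` ends up bounded by
`(n+2)(n+3)/w(n+4)`, which is `O(1/w n)` because `w (n + 4) ≥ ((n + 4)/K)^2 w n`.
-/

open MeasureTheory Real Filter Finset

/-- `‖a‖_{c,K,n} = (n/K)^{c n} |a_n|` (with `(0/K)^0 = 1`, which is `Real.rpow`'s convention). -/
noncomputable def seqNorm (c K : ℝ) (a : ℕ → ℂ) (n : ℕ) : ℝ :=
  ((n : ℝ) / K) ^ (c * n) * ‖a n‖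

/-- The operator `D`: `(D a)_n = (n+2) Σ_{m > n, m − n odd} a_m`, i.e.
`(D a)_n = (n+2) Σ_{j≥0} a_{n+2j+1}` (interpreted via `tsum`). -/
noncomputable def Dop (a : ℕ → ℂ) (n : ℕ) : ℂ :=
  ((n : ℂ) + 2) * ∑' j : ℕ, a (n + 2 * j + 1)

/-- The operator `H`: `(H a)_n = a_n / ((n+2)² − 1)`. -/
noncomputable def Hop (a : ℕ → ℂ) (n : ℕ) : ℂ :=
  a n / (((n : ℂ) + 2) ^ 2 - 1)

/-- The operator `T = D³ ∘ H ∘ D`. -/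
noncomputable def Tp (a : ℕ → ℂ) : ℕ → ℂ :=
  Dop (Dop (Dop (Hop (Dop a))))

lemma exists_forall_le_of_eventually_le {α : Type*} [Preorder α] [IsDirectedOrder α] {f : ℕ → α}
    {B : α} (h : ∀ᶠ n in atTop, f n ≤ B) :
    ∃ C, ∀ n, f n ≤ C := by
  obtain ⟨C, hC⟩ := (isBoundedUnder_of_eventually_le h).bddAbove_range
  exact ⟨C, fun n => hC (Set.mem_range_self n)⟩

def TwoStepDecay (r : ℝ) (g : ℕ → ℝ) : Prop :=
  (∀ m, 0 < g m) ∧ ∀ᶠ m in atTop, g (m + 2) ≤ r * g m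

namespace TwoStepDecay

variable {r s : ℝ} {g q : ℕ → ℝ}

lemma comp_add (hg : TwoStepDecay r g) (k : ℕ) : TwoStepDecay r (fun m => g (m + k)) :=
  ⟨fun m => hg.1 _, ((tendsto_add_atTop_nat k).eventually hg.2).mono fun m hm => by
    rwa [add_right_comm] at hm⟩

lemma mul (hg : TwoStepDecay r g) (hq : TwoStepDecay s q) :
    TwoStepDecay (r * s) (fun m => g m * q m) :=
  ⟨fun m => mul_pos (hg.1 m) (hq.1 m), (hg.2.and hq.2).mono fun m ⟨hgm, hqm⟩ =>
    calc g (m + 2) * q (m + 2) ≤ (r * g m) * (s * q m) :=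
          mul_le_mul hgm hqm (hq.1 _).le ((hg.1 _).le.trans hgm)
      _ = r * s * (g m * q m) := by ring⟩

lemma exists_tsum_le (hg : TwoStepDecay r g) (hr : r < 1) :
    ∃ C, 0 ≤ C ∧ ∀ n, Summable (fun j => g (n + 2 * j)) ∧ ∑' j, g (n + 2 * j) ≤ C * g n := by
  obtain ⟨N, hN⟩ := eventually_atTop.1 hg.2
  have hr0 : 0 ≤ r := nonneg_of_mul_nonneg_left ((hg.1 _).le.trans (hN N le_rfl)) (hg.1 N)
  have hgeom_summable : Summable fun j : ℕ => r ^ j := summable_geometric_of_lt_one hr0 hr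
  have hgeom : ∀ n ≥ N, ∀ j, g (n + 2 * j) ≤ r ^ j * g n := by
    intro n hn j
    induction j with
    | zero => simp
    | succ j ih =>
      calc g (n + 2 * (j + 1)) = g (n + 2 * j + 2) := by ring_nf
        _ ≤ r * g (n + 2 * j) := hN _ (by omega)
        _ ≤ r * (r ^ j * g n) := by gcongr
        _ = r ^ (j + 1) * g n := by ring
  have hsum : ∀ n, Summable fun j => g (n + 2 * j) := by
    intro n
    rw [← summable_nat_add_iff N]
    refine (hgeom_summable.mul_right (g (n + 2 * N))).of_nonneg_of_le (fun j => (hg.1 _).le)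
      fun j => ?_
    convert hgeom (n + 2 * N) (by omega) j using 2
    ring
  have hratio : ∀ n ≥ N, (∑' j, g (n + 2 * j)) / g n ≤ (1 - r)⁻¹ := by
    intro n hn
    rw [div_le_iff₀ (hg.1 n), ← tsum_geometric_of_lt_one hr0 hr, ← tsum_mul_right]
    exact (hsum n).tsum_le_tsum (hgeom n hn) (hgeom_summable.mul_right _)
  obtain ⟨C, hC⟩ := exists_forall_le_of_eventually_le (eventually_atTop.2 ⟨N, hratio⟩)
  have hC0 : 0 ≤ C :=
    (div_nonneg (tsum_nonneg fun j => (hg.1 _).le) (hg.1 0).le).trans (hC 0)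
  exact ⟨C, hC0, fun n => ⟨hsum n, (div_le_iff₀ (hg.1 n)).1 (hC n)⟩⟩

end TwoStepDecay

lemma twoStepDecay_natCast_add_two : TwoStepDecay 2 (fun m : ℕ => (m : ℝ) + 2) :=
  ⟨fun m => by positivity, Eventually.of_forall fun m => by
    push_cast
    linarith [m.cast_nonneg' (α := ℝ)]⟩

lemma twoStepDecay_inv_natCast_add_one : TwoStepDecay 1 (fun m : ℕ => ((m : ℝ) + 1)⁻¹) :=
  ⟨fun m => by positivity, Eventually.of_forall fun m => by
    dsimp only
    rw [one_mul]
    gcongr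
    linarith⟩

lemma exists_norm_Dop_le {r : ℝ} {g : ℕ → ℝ} (hg : TwoStepDecay r g) (hr : r < 1) :
    ∃ C, 0 ≤ C ∧ ∀ (b : ℕ → ℂ) (M : ℝ), (∀ m, ‖b m‖ ≤ M * g m) →
      (∀ n, Summable fun j => b (n + 2 * j + 1)) ∧
      ∀ n, ‖Dop b n‖ ≤ C * M * (((n : ℝ) + 2) * g (n + 1)) := by
  obtain ⟨C, hC0, hC⟩ := hg.exists_tsum_le hr
  refine ⟨C, hC0, fun b M hb => ?_⟩
  have hM : 0 ≤ M := nonneg_of_mul_nonneg_left ((norm_nonneg _).trans (hb 0)) (hg.1 0)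
  have hmajorant : ∀ n, HasSum (fun j => M * g (n + 2 * j + 1)) (M * ∑' j, g (n + 1 + 2 * j)) := by
    intro n
    simpa only [add_right_comm n (2 * _) 1] using (hC (n + 1)).1.hasSum.mul_left M
  refine ⟨fun n => (hmajorant n).summable.of_norm_bounded fun j => hb _, fun n => ?_⟩
  have hnorm : ‖(n : ℂ) + 2‖ = (n : ℝ) + 2 := by exact_mod_cast Complex.norm_natCast (n + 2)
  rw [Dop, norm_mul, hnorm]
  calc ((n : ℝ) + 2) * ‖∑' j, b (n + 2 * j + 1)‖ ≤ ((n : ℝ) + 2) * (M * (C * g (n + 1))) := by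
        gcongr
        exact (tsum_of_norm_bounded (hmajorant n) fun j => hb _).trans
          (mul_le_mul_of_nonneg_left (hC (n + 1)).2 hM)
    _ = C * M * (((n : ℝ) + 2) * g (n + 1)) := by ring

lemma norm_Hop_le {b : ℕ → ℂ} {G : ℕ → ℝ} {M : ℝ}
    (hb : ∀ m, ‖b m‖ ≤ M * (((m : ℝ) + 2) * G m)) (n : ℕ) :
    ‖Hop b n‖ ≤ M * (((n : ℝ) + 1)⁻¹ * G n) := by
  have hden : ((n : ℂ) + 2) ^ 2 - 1 = (((n + 1) * (n + 3) : ℕ) : ℂ) := by push_cast; ring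
  have hMG : 0 ≤ M * G n := by
    have := (norm_nonneg _).trans (hb n)
    rw [mul_left_comm] at this
    exact nonneg_of_mul_nonneg_right this (by positivity)
  rw [Hop, norm_div, hden, Complex.norm_natCast, div_le_iff₀ (by positivity)]
  calc ‖b n‖ ≤ M * (((n : ℝ) + 2) * G n) := hb n
    _ = M * G n * ((n : ℝ) + 2) := by ring
    _ ≤ M * G n * ((n : ℝ) + 3) := by gcongr; linarith
    _ = M * (((n : ℝ) + 1)⁻¹ * G n) * (((n + 1) * (n + 3) : ℕ) : ℝ) := by
        push_cast; field_simp

section Weight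

variable {c K : ℝ}

noncomputable def seqWeight (c K : ℝ) (m : ℕ) : ℝ := ((m : ℝ) / K) ^ (c * m)

lemma seqWeight_pos (hK : 0 < K) (m : ℕ) : 0 < seqWeight c K m := by
  rcases m.eq_zero_or_pos with rfl | hm
  · simp [seqWeight]
  · exact rpow_pos_of_pos (by positivity) _

lemma pow_mul_seqWeight_le (hc : 1 / 2 ≤ c) (hK : 0 < K) {m d : ℕ} (hmd : K ≤ m + 2 * d) :
    (((m : ℝ) + 2 * d) / K) ^ d * seqWeight c K m ≤ seqWeight c K (m + 2 * d) := by
  have hx : 1 ≤ ((m : ℝ) + 2 * d) / K := (one_le_div hK).2 hmd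
  calc (((m : ℝ) + 2 * d) / K) ^ d * seqWeight c K m
      = (((m : ℝ) + 2 * d) / K) ^ (d : ℝ) * ((m : ℝ) / K) ^ (c * m) := by
        rw [rpow_natCast, seqWeight]
    _ ≤ (((m : ℝ) + 2 * d) / K) ^ (c * (2 * d)) * (((m : ℝ) + 2 * d) / K) ^ (c * m) := by
        refine mul_le_mul (rpow_le_rpow_of_exponent_le hx ?_)
          (rpow_le_rpow (by positivity) ?_ (by positivity)) (by positivity) (by positivity)
        · nlinarith [d.cast_nonneg' (α := ℝ)]
        · gcongr
          linarith
    _ = seqWeight c K (m + 2 * d) := by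
        rw [← rpow_add (by positivity), seqWeight]
        push_cast
        ring_nf

lemma eventually_four_mul_seqWeight_le (hc : 1 / 2 ≤ c) (hK : 0 < K) :
    ∀ᶠ m in atTop, 4 * seqWeight c K m ≤ seqWeight c K (m + 2) := by
  filter_upwards [eventually_ge_atTop ⌈4 * K⌉₊] with m hm
  have hm' : 4 * K ≤ m := (Nat.ceil_le).1 hm
  have h := pow_mul_seqWeight_le (d := 1) hc hK (by push_cast; linarith)
  have h4 : 4 ≤ ((m : ℝ) + 2) / K := by rw [le_div_iff₀ hK]; linarith
  simp only [Nat.cast_one, mul_one, pow_one] at h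
  exact (mul_le_mul_of_nonneg_right h4 (seqWeight_pos hK m).le).trans h

lemma eventually_sq_mul_seqWeight_le (hc : 1 / 2 ≤ c) (hK : 0 < K) :
    ∀ᶠ m : ℕ in atTop, ((m : ℝ) + 4) ^ 2 * seqWeight c K m ≤ K ^ 2 * seqWeight c K (m + 4) := by
  filter_upwards [eventually_ge_atTop ⌈K⌉₊] with m hm
  have hm' : K ≤ m := (Nat.ceil_le).1 hm
  have h : (((m : ℝ) + 4) / K) ^ 2 * seqWeight c K m ≤ seqWeight c K (m + 4) := by
    convert pow_mul_seqWeight_le (m := m) (d := 2) hc hK (by push_cast; linarith) using 3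
    push_cast
    ring
  rw [div_pow, div_mul_eq_mul_div, div_le_iff₀ (by positivity)] at h
  linarith

lemma twoStepDecay_inv_seqWeight (hc : 1 / 2 ≤ c) (hK : 0 < K) :
    TwoStepDecay (1 / 4) (fun m => (seqWeight c K m)⁻¹) :=
  ⟨fun m => inv_pos.2 (seqWeight_pos hK m),
    (eventually_four_mul_seqWeight_le hc hK).mono fun m hm =>
      (inv_anti₀ (mul_pos four_pos (seqWeight_pos hK m)) hm).trans_eq (by rw [mul_inv, one_div])⟩

lemma exists_seqWeight_mul_le (hc : 1 / 2 ≤ c) (hK : 0 < K) :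
    ∃ B, ∀ n : ℕ,
      seqWeight c K n * (((n : ℝ) + 2) * ((n : ℝ) + 3) * (seqWeight c K (n + 4))⁻¹) ≤ B := by
  refine exists_forall_le_of_eventually_le (B := K ^ 2) <|
    (eventually_sq_mul_seqWeight_le hc hK).mono fun n hn => ?_
  rw [← mul_assoc, mul_inv_le_iff₀ (seqWeight_pos hK _)]
  have hpoly : ((n : ℝ) + 2) * ((n : ℝ) + 3) ≤ ((n : ℝ) + 4) ^ 2 := by nlinarith
  nlinarith [seqWeight_pos (c := c) hK n]

end Weight

lemma exists_norm_Tp_le {c K : ℝ} (hc : 1 / 2 ≤ c) (hK : 0 < K) :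
    ∃ C, 0 ≤ C ∧ ∀ (a : ℕ → ℂ) (M : ℝ), (∀ m, ‖a m‖ ≤ M * (seqWeight c K m)⁻¹) →
      ((∀ n : ℕ, Summable (fun j : ℕ => a (n + 2 * j + 1))) ∧
       (∀ n : ℕ, Summable (fun j : ℕ => Hop (Dop a) (n + 2 * j + 1))) ∧
       (∀ n : ℕ, Summable (fun j : ℕ => Dop (Hop (Dop a)) (n + 2 * j + 1))) ∧
       (∀ n : ℕ, Summable (fun j : ℕ => Dop (Dop (Hop (Dop a))) (n + 2 * j + 1)))) ∧
      ∀ n, ‖Tp a n‖ ≤ C * M * (((n : ℝ) + 2) * ((n : ℝ) + 3) * (seqWeight c K (n + 4))⁻¹) := by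
  set g : ℕ → ℝ := fun m => (seqWeight c K m)⁻¹
  have hg : TwoStepDecay (1 / 4) g := twoStepDecay_inv_seqWeight hc hK
  obtain ⟨C₀, hC₀, hD₀⟩ := exists_norm_Dop_le hg (by norm_num)
  obtain ⟨C₁, hC₁, hD₁⟩ :=
    exists_norm_Dop_le (twoStepDecay_inv_natCast_add_one.mul (hg.comp_add 1)) (by norm_num)
  obtain ⟨C₂, hC₂, hD₂⟩ := exists_norm_Dop_le (hg.comp_add 2) (by norm_num)
  obtain ⟨C₃, hC₃, hD₃⟩ :=
    exists_norm_Dop_le (twoStepDecay_natCast_add_two.mul (hg.comp_add 3)) (by norm_num)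
  refine ⟨C₃ * C₂ * C₁ * C₀, by positivity, fun a M ha => ?_⟩
  obtain ⟨hs₀, hb₀⟩ := hD₀ a M ha
  obtain ⟨hs₁, hb₁⟩ := hD₁ _ _ (norm_Hop_le hb₀)
  -- the factor `1/(m+1)` gained from `H` cancels the factor `n + 2` of this `D`
  have hb₁' : ∀ n, ‖Dop (Hop (Dop a)) n‖ ≤ C₁ * (C₀ * M) * g (n + 2) := fun n =>
    (hb₁ n).trans_eq (by push_cast; field_simp; ring_nf)
  obtain ⟨hs₂, hb₂⟩ := hD₂ _ _ hb₁'
  obtain ⟨hs₃, hb₃⟩ := hD₃ _ _ hb₂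
  refine ⟨⟨hs₀, hs₁, hs₂, hs₃⟩, fun n => (hb₃ n).trans_eq ?_⟩
  simp only [g]
  push_cast
  ring

theorem Tp_bound (c K : ℝ) (hc : 1 / 2 ≤ c) (hK : 0 < K) :
    ∃ C : ℝ, ∀ a : ℕ → ℂ, BddAbove (Set.range (seqNorm c K a)) →
      ((∀ n : ℕ, Summable (fun j : ℕ => a (n + 2 * j + 1))) ∧
       (∀ n : ℕ, Summable (fun j : ℕ => Hop (Dop a) (n + 2 * j + 1))) ∧
       (∀ n : ℕ, Summable (fun j : ℕ => Dop (Hop (Dop a)) (n + 2 * j + 1))) ∧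
       (∀ n : ℕ, Summable (fun j : ℕ => Dop (Dop (Hop (Dop a))) (n + 2 * j + 1)))) ∧
      ∀ n : ℕ, seqNorm c K (Tp a) n ≤ C * ⨆ m : ℕ, seqNorm c K a m := by
  obtain ⟨C, hC, hT⟩ := exists_norm_Tp_le hc hK
  obtain ⟨B, hB⟩ := exists_seqWeight_mul_le hc hK
  refine ⟨C * B, fun a ha => ?_⟩
  set M := ⨆ m, seqNorm c K a m
  have hM : 0 ≤ M := (mul_nonneg (seqWeight_pos hK 0).le (norm_nonneg _)).trans (le_ciSup ha 0)
  have haM : ∀ m, ‖a m‖ ≤ M * (seqWeight c K m)⁻¹ := fun m =>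
    (le_mul_inv_iff₀ (seqWeight_pos hK m)).2 ((mul_comm _ _).trans_le (le_ciSup ha m))
  obtain ⟨hsum, hTa⟩ := hT a M haM
  refine ⟨hsum, fun n => ?_⟩
  calc seqNorm c K (Tp a) n = seqWeight c K n * ‖Tp a n‖ := rfl
    _ ≤ seqWeight c K n *
          (C * M * (((n : ℝ) + 2) * ((n : ℝ) + 3) * (seqWeight c K (n + 4))⁻¹)) :=
        mul_le_mul_of_nonneg_left (hTa n) (seqWeight_pos hK n).le
    _ = C * M * (seqWeight c K n *
          (((n : ℝ) + 2) * ((n : ℝ) + 3) * (seqWeight c K (n + 4))⁻¹)) := by ring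
    _ ≤ C * M * B := mul_le_mul_of_nonneg_left (hB n) (by positivity)
    _ = C * B * M := by ring
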